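/- Let $M$ be a bounded self-adjoint operator on a Hilbert space with $0 \notin \sigma(M)$, and let $A$ be a compact self-adjoint operator. Then for any $s > 0$ such that $[-s, s] \cap \sigma(M) = \emptyset$, the pair of spectral projections $(\mathbb{P}_{(-\infty,0)}(M+A), \mathbb{P}_{(-\infty,0)}(M))$ is Fredholm and its index satisfies $|\operatorname{ind}(M + A, M)| \le n_*(s; A)$, where $n_*(s; A)$ counts the singular values of $A$ exceeding $s$. -/

import Mathlib

open scoped ENNReal

variable {H : Type*} [NormedAddCommGroup H] [InnerProductSpace ℂ H] [CompleteSpace H]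

/-- `P` is the spectral projection `𝟙_{(-∞,0)}(M)` of the bounded self-adjoint
operator `M`: an orthogonal projection commuting with `M`, with `M` negative
definite on its range and nonnegative on its kernel (= orthogonal
complement of the range). -/
def IsNegSpectralProj (M P : H →L[ℂ] H) : Prop :=
  IsIdempotentElem P ∧ IsSelfAdjoint P ∧ M ∘L P = P ∘L M ∧
    (∀ x ∈ LinearMap.range (P : H →ₗ[ℂ] H), x ≠ 0 → M.reApplyInnerSelf x < 0) ∧
    (∀ x ∈ LinearMap.ker (P : H →ₗ[ℂ] H), 0 ≤ M.reApplyInnerSelf x)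

/-- Index of the pair of projections `(P, Q)`:
`dim ker (P - Q - 1) - dim ker (P - Q + 1)`. -/
noncomputable def pairIndex (P Q : H →L[ℂ] H) : ℤ :=
  (Module.finrank ℂ (LinearMap.ker ((P - Q - 1 : H →L[ℂ] H) : H →ₗ[ℂ] H)) : ℤ) -
    (Module.finrank ℂ (LinearMap.ker ((P - Q + 1 : H →L[ℂ] H) : H →ₗ[ℂ] H)) : ℤ)

/-- `nStar s T` counts the singular values of `T` exceeding `s`
(variational characterization). -/
noncomputable def nStar (s : ℝ) (T : H →L[ℂ] H) : ℕ∞ :=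
  ⨆ V : {V : Submodule ℂ H // ∀ x ∈ V, x ≠ 0 → s * ‖x‖ < ‖T x‖},
    Cardinal.toENat (Module.rank ℂ V.1)

/-!
With `Q = 𝟙_{(-∞,0)}(M)`, the operator `M (1 - 2Q)` is `|M|`: it is nonnegative and its square
is `M²`, so `(|M| - t)(|M| + t) = (M - t)(M + t)` is invertible for `0 ≤ t ≤ s` and the spectrum
of `|M|` lies in `(s, ∞)`. By compactness of the spectrum `|M| ≥ c` for some `c > s`, i.e.
`M ≥ c` on `ker Q` and `M ≤ -c` on `ran Q`.

Now `ker (P - Q - 1) = ran P ∩ ker Q` and `ker (P - Q + 1) = ker P ∩ ran Q`. On the first,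
`⟪(M + A) x, x⟫ < 0 ≤ ⟪M x, x⟫ - c ‖x‖²`; on the second, `⟪(M + A) x, x⟫ ≥ 0 ≥ ⟪M x, x⟫ + c ‖x‖²`.
Either way `|⟪A x, x⟫| > s ‖x‖²`, so `‖A x‖ > s ‖x‖` for `x ≠ 0`. A compact operator bounded
below on a closed subspace forces it to be finite-dimensional, and each kernel competes in the
supremum defining `n_*(s; A)`, which therefore bounds both dimensions and their difference.
-/

open scoped InnerProductSpace NNReal
open RCLike

theorem exists_gt_algebraMap_le_of_lt_spectrum {A : Type*} [CStarAlgebra A] [PartialOrder A]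
    [StarOrderedRing A] {a : A} (ha : IsSelfAdjoint a) {s : ℝ}
    (h : ∀ x ∈ spectrum ℝ a, s < x) : ∃ c > s, algebraMap ℝ A c ≤ a := by
  simp_rw [algebraMap_le_iff_le_spectrum (a := a)]
  rcases (spectrum ℝ a).eq_empty_or_nonempty with hempty | hne
  · exact ⟨s + 1, by linarith, by simp [hempty]⟩
  · obtain ⟨c, hc, hmin⟩ := (isCompact_iff_compactSpace.mpr inferInstance :
      IsCompact (spectrum ℝ a)).exists_isMinOn hne continuousOn_id
    exact ⟨c, h c hc, hmin⟩

theorem spectrum.notMem_of_mul_self_eq_mul_self {R A : Type*} [CommRing R] [Ring A]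
    [Algebra R A] {a b : A} (hab : a * a = b * b) {r : R} (hr : r ∉ spectrum R b)
    (hnr : -r ∉ spectrum R b) : r ∉ spectrum R a := by
  rw [spectrum.notMem_iff] at *
  have hcomm : Commute (algebraMap R A r - a) (algebraMap R A r + a) :=
    ((Commute.refl _).add_right (Algebra.commute_algebraMap_left r a)).sub_left
      ((Algebra.commute_algebraMap_right r a).add_right (Commute.refl a))
  have hfactor : (algebraMap R A r - a) * (algebraMap R A r + a) =
      (algebraMap R A r - b) * (algebraMap R A r + b) := by
    simp only [sub_mul, mul_add, Algebra.commutes r, hab]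
    abel
  have hplus : IsUnit (algebraMap R A r + b) := by
    simpa [sub_eq_add_neg, ← neg_add', add_comm] using hnr.neg
  exact (hcomm.isUnit_mul_iff.mp (hfactor ▸ hr.mul hplus)).1

theorem IsStarProjection.isSelfAdjoint_one_sub_two_mul {R : Type*} [Ring R] [StarRing R]
    {p : R} (hp : IsStarProjection p) : IsSelfAdjoint (1 - 2 * p) :=
  (IsSelfAdjoint.one R).sub (((IsSelfAdjoint.ofNat 2).commute_iff hp.isSelfAdjoint).mp
    (Commute.ofNat_left 2 p))

theorem IsStarProjection.one_sub_two_mul_mul_self {R : Type*} [Ring R] [Star R]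
    {p : R} (hp : IsStarProjection p) : (1 - 2 * p) * (1 - 2 * p) = 1 := by
  have hpp : p * p = p := hp.isIdempotentElem.eq
  simp only [sub_mul, mul_sub, mul_one, one_mul, two_mul, mul_add, add_mul, hpp]
  abel

theorem ContinuousLinearMap.mul_norm_sq_le_re_inner_of_algebraMap_le {E : Type*}
    [NormedAddCommGroup E] [InnerProductSpace ℂ E] {T : E →L[ℂ] E} {c : ℝ}
    (hT : algebraMap ℝ (E →L[ℂ] E) c ≤ T) (x : E) : c * ‖x‖ ^ 2 ≤ re ⟪T x, x⟫_ℂ := by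
  have hpos := ((ContinuousLinearMap.le_def _ _).mp hT).re_inner_nonneg_left x
  rw [sub_apply, inner_sub_left, map_sub, sub_nonneg, Algebra.algebraMap_eq_smul_one,
    smul_apply, one_apply_eq_self, RCLike.real_smul_eq_coe_smul (K := ℂ), inner_smul_real_left,
    RCLike.smul_re, inner_self_eq_norm_sq] at hpos
  exact hpos

section InnerProductSpace

variable {𝕜 E : Type*} [RCLike 𝕜] [NormedAddCommGroup E] [InnerProductSpace 𝕜 E]

theorem mul_norm_lt_norm_apply_of_lt_abs_re_inner {A : E →L[𝕜] E} {s : ℝ} {x : E}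
    (h : s * ‖x‖ ^ 2 < |re ⟪A x, x⟫_𝕜|) : s * ‖x‖ < ‖A x‖ := by
  have hbound : |re ⟪A x, x⟫_𝕜| ≤ ‖A x‖ * ‖x‖ :=
    (abs_re_le_norm _).trans (norm_inner_le_norm _ _)
  have hx : 0 < ‖x‖ := by
    by_contra! hx
    simp [norm_le_zero_iff.mp hx] at h
  nlinarith

variable [CompleteSpace E]

theorem IsStarProjection.re_inner_apply_self {P : E →L[𝕜] E}
    (hP : IsStarProjection P) (x : E) : re ⟪P x, x⟫_𝕜 = ‖P x‖ ^ 2 := by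
  have hPP : P (P x) = P x := congr($(hP.isIdempotentElem.eq) x)
  have hsymm : ⟪P (P x), x⟫_𝕜 = ⟪P x, P x⟫_𝕜 := hP.isSelfAdjoint.isSymmetric (P x) x
  rw [← inner_self_eq_norm_sq (𝕜 := 𝕜), ← hsymm, hPP]

theorem IsStarProjection.apply_eq_zero_of_add_apply_eq_zero {P Q : E →L[𝕜] E}
    (hP : IsStarProjection P) (hQ : IsStarProjection Q) {x : E} (h : P x + Q x = 0) :
    P x = 0 ∧ Q x = 0 := by
  have hsum : ‖P x‖ ^ 2 + ‖Q x‖ ^ 2 = 0 := by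
    rw [← hP.re_inner_apply_self, ← hQ.re_inner_apply_self, ← map_add, ← inner_add_left, h,
      inner_zero_left, map_zero]
  constructor <;> apply norm_eq_zero.mp <;> nlinarith [norm_nonneg (P x), norm_nonneg (Q x)]

theorem IsStarProjection.apply_eq_self_of_mem_ker_sub_sub_one {P Q : E →L[𝕜] E}
    (hP : IsStarProjection P) (hQ : IsStarProjection Q) {x : E}
    (hx : x ∈ LinearMap.ker ((P - Q - 1 : E →L[𝕜] E) : E →ₗ[𝕜] E)) : P x = x ∧ Q x = 0 := by
  have h : (1 - P) x + Q x = 0 := by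
    have hx' : P x - Q x - x = 0 := hx
    rw [sub_apply, one_apply_eq_self, ← neg_eq_zero, ← hx']
    abel
  obtain ⟨hP', hQ'⟩ := hP.one_sub.apply_eq_zero_of_add_apply_eq_zero hQ h
  exact ⟨(sub_eq_zero.mp hP').symm, hQ'⟩

theorem IsStarProjection.apply_eq_zero_of_mem_ker_sub_add_one {P Q : E →L[𝕜] E}
    (hP : IsStarProjection P) (hQ : IsStarProjection Q) {x : E}
    (hx : x ∈ LinearMap.ker ((P - Q + 1 : E →L[𝕜] E) : E →ₗ[𝕜] E)) : P x = 0 ∧ Q x = x := by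
  have h : P x + (1 - Q) x = 0 := by
    have hx' : P x - Q x + x = 0 := hx
    rw [sub_apply, one_apply_eq_self, ← hx']
    abel
  obtain ⟨hP', hQ'⟩ := hP.apply_eq_zero_of_add_apply_eq_zero hQ.one_sub h
  exact ⟨hP', (sub_eq_zero.mp hQ').symm⟩

end InnerProductSpace

theorem FiniteDimensional.of_isCompactOperator_of_antilipschitz {𝕜 E F : Type*}
    [NontriviallyNormedField 𝕜] [CompleteSpace 𝕜] [NormedAddCommGroup E] [NormedSpace 𝕜 E]
    [CompleteSpace E] [NormedAddCommGroup F] [NormedSpace 𝕜 F] {T : E →L[𝕜] F}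
    (hT : IsCompactOperator T) {K : ℝ≥0} (hK : AntilipschitzWith K T) :
    FiniteDimensional 𝕜 E := by
  obtain ⟨C, hC, hCnhds⟩ := hT
  exact .of_isCompactOperator_id
    ⟨T ⁻¹' C, (hK.isClosedEmbedding T.uniformContinuous).isCompact_preimage hC, hCnhds⟩

theorem Submodule.finiteDimensional_of_isCompactOperator {𝕜 E F : Type*}
    [NontriviallyNormedField 𝕜] [CompleteSpace 𝕜] [NormedAddCommGroup E] [NormedSpace 𝕜 E]
    [CompleteSpace E] [NormedAddCommGroup F] [NormedSpace 𝕜 F] {A : E →L[𝕜] F}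
    (hA : IsCompactOperator A) {s : ℝ} (hs : 0 < s) {V : Submodule 𝕜 E}
    (hVc : IsClosed (V : Set E)) (hV : ∀ x ∈ V, x ≠ 0 → s * ‖x‖ < ‖A x‖) :
    FiniteDimensional 𝕜 V := by
  have : CompleteSpace V := hVc.completeSpace_coe
  refine .of_isCompactOperator_of_antilipschitz (T := A ∘L V.subtypeL) (hA.comp_clm V.subtypeL)
    (K := s.toNNReal⁻¹) (ContinuousLinearMap.antilipschitz_of_bound _ fun x => ?_)
  rw [NNReal.coe_inv, Real.coe_toNNReal s hs.le, inv_mul_eq_div, le_div_iff₀ hs, mul_comm]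
  rcases eq_or_ne x 0 with rfl | hx0
  · simp
  · exact (hV x x.2 (by simpa using hx0)).le

theorem finrank_le_nStar {E : Type*} [NormedAddCommGroup E] [InnerProductSpace ℂ E] {s : ℝ}
    {T : E →L[ℂ] E} (V : Submodule ℂ E) [FiniteDimensional ℂ V]
    (hV : ∀ x ∈ V, x ≠ 0 → s * ‖x‖ < ‖T x‖) : (Module.finrank ℂ V : ℕ∞) ≤ nStar s T :=
  le_iSup_of_le (⟨V, hV⟩ : {V : Submodule ℂ E // ∀ x ∈ V, x ≠ 0 → s * ‖x‖ < ‖T x‖})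
    (by rw [← Module.finrank_eq_rank, Cardinal.toENat_nat])

namespace IsNegSpectralProj

variable {M Q : H →L[ℂ] H}

theorem isStarProjection (hQ : IsNegSpectralProj M Q) : IsStarProjection Q := ⟨hQ.1, hQ.2.1⟩

theorem commute (hQ : IsNegSpectralProj M Q) : Commute M Q := hQ.2.2.1

theorem re_inner_neg (hQ : IsNegSpectralProj M Q) {x : H} (hx : Q x = x) (hx0 : x ≠ 0) :
    re ⟪M x, x⟫_ℂ < 0 :=
  hQ.2.2.2.1 x ⟨x, hx⟩ hx0

theorem re_inner_nonpos (hQ : IsNegSpectralProj M Q) {x : H} (hx : Q x = x) :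
    re ⟪M x, x⟫_ℂ ≤ 0 := by
  rcases eq_or_ne x 0 with rfl | hx0
  · simp
  · exact (hQ.re_inner_neg hx hx0).le

theorem re_inner_nonneg (hQ : IsNegSpectralProj M Q) {x : H} (hx : Q x = 0) :
    0 ≤ re ⟪M x, x⟫_ℂ :=
  hQ.2.2.2.2 x hx

theorem mul_reflection_eq (hQ : IsNegSpectralProj M Q) :
    M * (1 - 2 * Q) = (1 - Q) * M * (1 - Q) - Q * M * Q := by
  have hQQ : Q * Q = Q := hQ.1.eq
  have hMQ : Q * M = M * Q := hQ.commute.eq.symm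
  simp only [sub_mul, mul_sub, mul_one, one_mul, mul_assoc, hQQ, hMQ, two_mul, mul_add]
  abel

theorem commute_reflection (hQ : IsNegSpectralProj M Q) : Commute M (1 - 2 * Q) :=
  (Commute.one_right M).sub_right ((Commute.ofNat_left 2 M).symm.mul_right hQ.commute)

theorem isSelfAdjoint_mul_reflection (hM : IsSelfAdjoint M) (hQ : IsNegSpectralProj M Q) :
    IsSelfAdjoint (M * (1 - 2 * Q)) :=
  (hM.commute_iff hQ.isStarProjection.isSelfAdjoint_one_sub_two_mul).mp hQ.commute_reflection

theorem mul_reflection_mul_self (hQ : IsNegSpectralProj M Q) :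
    M * (1 - 2 * Q) * (M * (1 - 2 * Q)) = M * M := by
  rw [mul_assoc, ← mul_assoc (1 - 2 * Q), ← hQ.commute_reflection.eq, mul_assoc,
    hQ.isStarProjection.one_sub_two_mul_mul_self, mul_one]

theorem nonneg_mul_reflection (hM : IsSelfAdjoint M) (hQ : IsNegSpectralProj M Q) :
    0 ≤ M * (1 - 2 * Q) := by
  rw [ContinuousLinearMap.nonneg_iff_isPositive, ContinuousLinearMap.isPositive_def']
  refine ⟨hQ.isSelfAdjoint_mul_reflection hM, fun x => ?_⟩
  have hQQ : ∀ y, Q (Q y) = Q y := fun y => congr($(hQ.1.eq) y)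
  have hker : ⟪((1 - Q) * M * (1 - Q)) x, x⟫_ℂ = ⟪M ((1 - Q) x), (1 - Q) x⟫_ℂ :=
    hQ.isStarProjection.one_sub.isSelfAdjoint.isSymmetric _ x
  have hran : ⟪(Q * M * Q) x, x⟫_ℂ = ⟪M (Q x), Q x⟫_ℂ := hQ.2.1.isSymmetric _ x
  rw [ContinuousLinearMap.reApplyInnerSelf_apply, hQ.mul_reflection_eq,
    sub_apply, inner_sub_left, map_sub, hker, hran, sub_nonneg]
  refine (hQ.re_inner_nonpos (hQQ x)).trans (hQ.re_inner_nonneg ?_)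
  simp [hQQ]

theorem exists_gt_re_inner_of_spectralGap (hM : IsSelfAdjoint M) (hQ : IsNegSpectralProj M Q)
    {s : ℝ} (hgap : ∀ t ∈ Set.Icc (-s) s, (t : ℂ) ∉ spectrum ℂ M) :
    ∃ c > s, (∀ x, Q x = 0 → c * ‖x‖ ^ 2 ≤ re ⟪M x, x⟫_ℂ) ∧
      ∀ x, Q x = x → re ⟪M x, x⟫_ℂ ≤ -(c * ‖x‖ ^ 2) := by
  have hgapℝ : ∀ t ∈ Set.Icc (-s) s, t ∉ spectrum ℝ M :=
    fun t ht h => hgap t ht (spectrum.algebraMap_mem ℂ h)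
  have hspec : ∀ t ∈ spectrum ℝ (M * (1 - 2 * Q)), s < t := by
    intro t ht
    have ht0 : 0 ≤ t := spectrum_nonneg_of_nonneg (hQ.nonneg_mul_reflection hM) ht
    by_contra! hts
    exact spectrum.notMem_of_mul_self_eq_mul_self hQ.mul_reflection_mul_self
      (hgapℝ t ⟨by linarith, hts⟩) (hgapℝ (-t) ⟨by linarith, by linarith⟩) ht
  obtain ⟨c, hsc, hcT⟩ :=
    exists_gt_algebraMap_le_of_lt_spectrum (hQ.isSelfAdjoint_mul_reflection hM) hspec
  have hform := ContinuousLinearMap.mul_norm_sq_le_re_inner_of_algebraMap_le hcT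
  refine ⟨c, hsc, fun x hx => ?_, fun x hx => ?_⟩
  · simpa [hx] using hform x
  · have hTx : (M * (1 - 2 * Q)) x = -M x := by simp [hx, two_smul]
    have := hform x
    rw [hTx, inner_neg_left, map_neg] at this
    linarith

theorem lt_norm_apply_of_mem_ker {A P : H →L[ℂ] H} (hM : IsSelfAdjoint M)
    (hP : IsNegSpectralProj (M + A) P) (hQ : IsNegSpectralProj M Q) {s : ℝ}
    (hgap : ∀ t ∈ Set.Icc (-s) s, (t : ℂ) ∉ spectrum ℂ M) :
    (∀ x ∈ LinearMap.ker ((P - Q - 1 : H →L[ℂ] H) : H →ₗ[ℂ] H), x ≠ 0 → s * ‖x‖ < ‖A x‖) ∧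
      ∀ x ∈ LinearMap.ker ((P - Q + 1 : H →L[ℂ] H) : H →ₗ[ℂ] H), x ≠ 0 → s * ‖x‖ < ‖A x‖ := by
  obtain ⟨c, hsc, hker, hran⟩ := hQ.exists_gt_re_inner_of_spectralGap hM hgap
  have hsplit (x : H) : re ⟪(M + A) x, x⟫_ℂ = re ⟪M x, x⟫_ℂ + re ⟪A x, x⟫_ℂ := by
    rw [add_apply, inner_add_left, map_add]
  constructor
  · intro x hx hx0
    obtain ⟨hPx, hQx⟩ :=
      hP.isStarProjection.apply_eq_self_of_mem_ker_sub_sub_one hQ.isStarProjection hx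
    have hneg := hsplit x ▸ hP.re_inner_neg hPx hx0
    have hpos := hker x hQx
    have hx2 : 0 ≤ ‖x‖ ^ 2 := by positivity
    exact mul_norm_lt_norm_apply_of_lt_abs_re_inner (lt_abs.mpr (.inr (by nlinarith)))
  · intro x hx hx0
    obtain ⟨hPx, hQx⟩ :=
      hP.isStarProjection.apply_eq_zero_of_mem_ker_sub_add_one hQ.isStarProjection hx
    have hnonneg := hsplit x ▸ hP.re_inner_nonneg hPx
    have hneg := hran x hQx
    have hx2 : 0 < ‖x‖ ^ 2 := by positivity
    exact mul_norm_lt_norm_apply_of_lt_abs_re_inner (lt_abs.mpr (.inl (by nlinarith)))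

end IsNegSpectralProj

theorem index_le_nStar_general (M A P Q : H →L[ℂ] H)
    (hM : IsSelfAdjoint M) (hAc : IsCompactOperator ⇑A)
    (s : ℝ) (hs : 0 < s)
    (hgap : ∀ t ∈ Set.Icc (-s) s, (t : ℂ) ∉ spectrum ℂ M)
    (hP : IsNegSpectralProj (M + A) P) (hQ : IsNegSpectralProj M Q) :
    FiniteDimensional ℂ (LinearMap.ker ((P - Q - 1 : H →L[ℂ] H) : H →ₗ[ℂ] H)) ∧
    FiniteDimensional ℂ (LinearMap.ker ((P - Q + 1 : H →L[ℂ] H) : H →ₗ[ℂ] H)) ∧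
    ((pairIndex P Q).natAbs : ℕ∞) ≤ nStar s A := by
  obtain ⟨large₁, large₂⟩ := IsNegSpectralProj.lt_norm_apply_of_mem_ker hM hP hQ hgap
  have fin₁ := Submodule.finiteDimensional_of_isCompactOperator hAc hs
    (ContinuousLinearMap.isClosed_ker _) large₁
  have fin₂ := Submodule.finiteDimensional_of_isCompactOperator hAc hs
    (ContinuousLinearMap.isClosed_ker _) large₂
  refine ⟨fin₁, fin₂, ?_⟩
  have hidx : (pairIndex P Q).natAbs ≤
      max (Module.finrank ℂ (LinearMap.ker ((P - Q - 1 : H →L[ℂ] H) : H →ₗ[ℂ] H)))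
        (Module.finrank ℂ (LinearMap.ker ((P - Q + 1 : H →L[ℂ] H) : H →ₗ[ℂ] H))) := by
    unfold pairIndex
    omega
  calc ((pairIndex P Q).natAbs : ℕ∞) ≤ (max _ _ : ℕ) := by exact_mod_cast hidx
    _ ≤ nStar s A := by
      rw [Nat.mono_cast.map_max]
      exact max_le (finrank_le_nStar _ large₁) (finrank_le_nStar _ large₂)

/-- Estimate (4.10): if `M` is bounded self-adjoint with `0 ∉ σ(M)`, `A` is
compact self-adjoint and `[-s,s] ∩ σ(M) = ∅`, then the pair of negative
spectral projections of `M + A` and `M` is Fredholm and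
`|ind(M + A, M)| ≤ n_*(s; A)`. -/
theorem index_le_nStar (M A P Q : H →L[ℂ] H)
    (hM : IsSelfAdjoint M) (hA : IsSelfAdjoint A) (hAc : IsCompactOperator ⇑A)
    (s : ℝ) (hs : 0 < s)
    (hgap : ∀ t ∈ Set.Icc (-s) s, (t : ℂ) ∉ spectrum ℂ M)
    (hP : IsNegSpectralProj (M + A) P) (hQ : IsNegSpectralProj M Q) :
    FiniteDimensional ℂ (LinearMap.ker ((P - Q - 1 : H →L[ℂ] H) : H →ₗ[ℂ] H)) ∧
    FiniteDimensional ℂ (LinearMap.ker ((P - Q + 1 : H →L[ℂ] H) : H →ₗ[ℂ] H)) ∧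
    ((pairIndex P Q).natAbs : ℕ∞) ≤ nStar s A :=
  index_le_nStar_general M A P Q hM hAc s hs hgap hP hQ
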